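/- Let (X, P_X) and (Y, P_Y) be finite metric measure spaces with m-pointed partitions whose partition blocks all have metric diameter at most ε > 0. Define δ((X,P_X),(Y,P_Y)) = GW(μ)^{1/2}, where μ = Σ_{p,q} μ_m(xᵖ,y^q) μ̄_{xᵖ,y^q} is the coupling produced by the quantized Gromov–Wasserstein algorithm: μ_m is a minimizer of the Gromov–Wasserstein loss over C(μ_{P_X}, μ_{P_Y}) (so GW(μ_m)^{1/2} = d_GW(Xᵐ, Yᵐ)), and each μ_{xᵖ,y^q} ∈ C(μ_{Uᵖ}, μ_{V^q}) is a minimizer of the local linear matching objective Σ_{x∈Uᵖ, y∈V^q} (d_X(x,xᵖ) − d_Y(y,y^q))² μ_{xᵖ,y^q}(x,y). Then |d_GW(X, Y) − δ((X,P_X),(Y,P_Y))| ≤ 2(q(P_X) + q(P_Y)) + 8ε. -/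

import Mathlib

open Finset

noncomputable section

/-- A probability vector on a finite type. -/
def IsProb {X : Type*} [Fintype X] (μ : X → ℝ) : Prop :=
  (∀ x, 0 ≤ μ x) ∧ (∑ x, μ x) = 1

/-- `μ` is a coupling of the probability vectors `μX` and `μY`. -/
def IsCoupling {X Y : Type*} [Fintype X] [Fintype Y]
    (μX : X → ℝ) (μY : Y → ℝ) (μ : X → Y → ℝ) : Prop :=
  (∀ x y, 0 ≤ μ x y) ∧ (∀ x, (∑ y, μ x y) = μX x) ∧ (∀ y, (∑ x, μ x y) = μY y)

/-- The Gromov–Wasserstein loss of a coupling, for given distance functions. -/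
def GWLoss {X Y : Type*} [Fintype X] [Fintype Y]
    (dX : X → X → ℝ) (dY : Y → Y → ℝ) (μ : X → Y → ℝ) : ℝ :=
  ∑ x, ∑ y, ∑ x', ∑ y', (dX x x' - dY y y') ^ 2 * μ x y * μ x' y'

/-- The Gromov–Wasserstein distance between two finite mm-spaces. -/
def dGW {X Y : Type*} [Fintype X] [Fintype Y]
    (dX : X → X → ℝ) (dY : Y → Y → ℝ) (μX : X → ℝ) (μY : Y → ℝ) : ℝ :=
  sInf {r : ℝ | ∃ μ, IsCoupling μX μY μ ∧ r = Real.sqrt (GWLoss dX dY μ)}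

/-- An `m`-pointed partition of `X`: each point is assigned to one of `m` blocks
(`part`), and each block `p` has a distinguished representative `rep p` lying in it.
Blocks are the fibers of `part`; they are disjoint, cover `X`, and are nonempty. -/
structure PointedPartition (X : Type*) (m : ℕ) where
  part : X → Fin m
  rep : Fin m → X
  part_rep : ∀ p, part (rep p) = p

/-- The mass `μ_X(Uᵖ)` of the block `Uᵖ`; as a function of `p` this is the measure
`μ_{P_X}` of the quantized representation `Xᵐ` (identified with `Fin m`). -/
def blockMass {X : Type*} [Fintype X] (μX : X → ℝ) {m : ℕ}
    (P : PointedPartition X m) (p : Fin m) : ℝ :=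
  ∑ x, if P.part x = p then μX x else 0

/-- The normalized measure `μ_{Uᵖ} = μ_X|_{Uᵖ} / μ_X(Uᵖ)` of a block, extended by zero
to all of `X` (this is `μ̄_{Uᵖ}`). -/
def blockMeasure {X : Type*} [Fintype X] (μX : X → ℝ) {m : ℕ}
    (P : PointedPartition X m) (p : Fin m) (x : X) : ℝ :=
  if P.part x = p then μX x / blockMass μX P p else 0

/-- `μ` is a quantization coupling: `μ(x,y) = Σ_{p,q} μm(xᵖ,y^q) μ̄_{xᵖ,y^q}(x,y)` where
`μm` couples the quantized measures and each `ν p q` is (the extension by zero of) a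
coupling of the block measures with `ν p q (xᵖ, y^q) > 0`. -/
def IsQuantCoupling {X Y : Type*} [Fintype X] [Fintype Y] {m : ℕ}
    (μX : X → ℝ) (μY : Y → ℝ)
    (PX : PointedPartition X m) (PY : PointedPartition Y m)
    (μ : X → Y → ℝ) : Prop :=
  ∃ (μm : Fin m → Fin m → ℝ) (ν : Fin m → Fin m → X → Y → ℝ),
    IsCoupling (blockMass μX PX) (blockMass μY PY) μm ∧
    (∀ p q, IsCoupling (blockMeasure μX PX p) (blockMeasure μY PY q) (ν p q)) ∧
    (∀ p q, 0 < ν p q (PX.rep p) (PY.rep q)) ∧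
    (∀ x y, μ x y = ∑ p, ∑ q, μm p q * ν p q x y)

/-- The quantized Gromov–Wasserstein distance between `m`-pointed mm-spaces. -/
def dqGW {X Y : Type*} [Fintype X] [Fintype Y] {m : ℕ}
    (dX : X → X → ℝ) (dY : Y → Y → ℝ) (μX : X → ℝ) (μY : Y → ℝ)
    (PX : PointedPartition X m) (PY : PointedPartition Y m) : ℝ :=
  sInf {r : ℝ | ∃ μ, IsQuantCoupling μX μY PX PY μ ∧ r = Real.sqrt (GWLoss dX dY μ)}

/-- The quantized eccentricity `q(P_X) = (Σ_p μ_X(Uᵖ) s_{Uᵖ}(xᵖ)²)^{1/2}`, where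
`s_{Uᵖ}(xᵖ)² = Σ_{x ∈ Uᵖ} d_X(xᵖ,x)² μ_{Uᵖ}(x)`. -/
def qEcc {X : Type*} [Fintype X] (dX : X → X → ℝ) (μX : X → ℝ) {m : ℕ}
    (P : PointedPartition X m) : ℝ :=
  Real.sqrt (∑ p, blockMass μX P p * ∑ x, dX (P.rep p) x ^ 2 * blockMeasure μX P p x)

/-- The `m`-quantized eccentricity `q_m(X)`: minimum of `q(P_X)` over `m`-pointed
partitions. -/
def qEccMin (X : Type*) [Fintype X] (dX : X → X → ℝ) (μX : X → ℝ) (m : ℕ) : ℝ :=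
  sInf {r : ℝ | ∃ P : PointedPartition X m, r = qEcc dX μX P}

end

/-- `J*(x,y,x',y')`: the approximation of `d_X(x,x') − d_Y(y,y')` obtained by routing
through the representatives of the blocks containing the points. -/
noncomputable def Jstar {X Y : Type*} [MetricSpace X] [MetricSpace Y] {m : ℕ}
    (PX : PointedPartition X m) (PY : PointedPartition Y m)
    (x : X) (y : Y) (x' : X) (y' : Y) : ℝ :=
  dist x (PX.rep (PX.part x)) + dist (PX.rep (PX.part x)) (PX.rep (PX.part x')) +
      dist (PX.rep (PX.part x')) x' -
    dist y (PY.rep (PY.part y)) - dist (PY.rep (PY.part y)) (PY.rep (PY.part y')) -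
      dist (PY.rep (PY.part y')) y'

/-- The loss `GW*(μ) = Σ J*(x,y,x',y')² μ(x,y) μ(x',y')`. -/
noncomputable def GWStarLoss {X Y : Type*} [Fintype X] [Fintype Y]
    [MetricSpace X] [MetricSpace Y] {m : ℕ}
    (PX : PointedPartition X m) (PY : PointedPartition Y m) (μ : X → Y → ℝ) : ℝ :=
  ∑ x, ∑ y, ∑ x', ∑ y', Jstar PX PY x y x' y' ^ 2 * μ x y * μ x' y'

/-!
For a coupling `μ`, `√GW(μ)` is the `L²(μ ⊗ μ)` norm of `(x, y, x', y') ↦ d(x, x') - d(y, y')`.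
Replacing every point by the representative of its block changes this function pointwise by at
most `e(x) + e(x') + e(y) + e(y')`, where `e` is the distance to the representative, so by
Minkowski's inequality `√GW(μ)` moves by at most `2 (‖e_X‖ + ‖e_Y‖)` in `L²`.

Applied with `e ≤ ε` to the assembled coupling, whose image under the block maps is `μm`, this
gives `δ ≤ d_GW(Xᵐ, Yᵐ) + 4ε`. Applied to the image of an arbitrary coupling of `X` and `Y`,
where `‖e_X‖ = q(P_X)`, it gives `d_GW(Xᵐ, Yᵐ) ≤ d_GW(X, Y) + 2 (q(P_X) + q(P_Y))`. Finally
`d_GW(X, Y) ≤ δ` because the assembled measure is a coupling.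
-/

section WeightedL2

variable {ι : Type*} [Fintype ι] {w : ι → ℝ}

theorem sqrt_sum_mul_sq_add_le (hw : ∀ i, 0 ≤ w i) (f g : ι → ℝ) :
    √(∑ i, w i * (f i + g i) ^ 2) ≤ √(∑ i, w i * f i ^ 2) + √(∑ i, w i * g i ^ 2) := by
  let v : (ι → ℝ) → EuclideanSpace ℝ ι := fun h => WithLp.toLp 2 fun i => √(w i) * h i
  have hv : ∀ h : ι → ℝ, √(∑ i, w i * h i ^ 2) = ‖v h‖ := fun h => by
    simp [v, EuclideanSpace.norm_eq, mul_pow, Real.sq_sqrt (hw _)]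
  have hadd : v (f + g) = v f + v g := by ext i; simp [v, mul_add]
  calc √(∑ i, w i * (f i + g i) ^ 2) = ‖v f + v g‖ := by rw [← hadd]; exact hv (f + g)
    _ ≤ ‖v f‖ + ‖v g‖ := norm_add_le _ _
    _ = √(∑ i, w i * f i ^ 2) + √(∑ i, w i * g i ^ 2) := by rw [hv, hv]

theorem sqrt_sum_mul_sq_le_add_of_abs_sub_le (hw : ∀ i, 0 ≤ w i) {f g b : ι → ℝ}
    (h : ∀ i, |f i - g i| ≤ b i) :
    √(∑ i, w i * f i ^ 2) ≤ √(∑ i, w i * g i ^ 2) + √(∑ i, w i * b i ^ 2) := by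
  calc √(∑ i, w i * f i ^ 2) = √(∑ i, w i * (g i + (f i - g i)) ^ 2) := by simp
    _ ≤ √(∑ i, w i * g i ^ 2) + √(∑ i, w i * (f i - g i) ^ 2) := sqrt_sum_mul_sq_add_le hw _ _
    _ ≤ √(∑ i, w i * g i ^ 2) + √(∑ i, w i * b i ^ 2) := by
      have hsq : ∀ i, (f i - g i) ^ 2 ≤ b i ^ 2 := fun i => by
        rw [← sq_abs]
        exact pow_le_pow_left₀ (abs_nonneg _) (h i) 2
      exact add_le_add le_rfl
        (Real.sqrt_le_sqrt (sum_le_sum fun i _ => mul_le_mul_of_nonneg_left (hsq i) (hw i)))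

end WeightedL2

section ProductWeights

variable {α : Type*} [Fintype α] {π : α → ℝ}

theorem sum_prod_mul_mul_fst (hπ : ∑ a, π a = 1) (φ : α → ℝ) :
    ∑ i : α × α, π i.1 * π i.2 * φ i.1 = ∑ a, π a * φ a := by
  simp only [Fintype.sum_prod_type, ← sum_mul, ← mul_sum, hπ, mul_one]

theorem sum_prod_mul_mul_snd (hπ : ∑ a, π a = 1) (φ : α → ℝ) :
    ∑ i : α × α, π i.1 * π i.2 * φ i.2 = ∑ a, π a * φ a := by
  simp only [Fintype.sum_prod_type, mul_assoc, ← mul_sum, ← sum_mul, hπ, one_mul]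

end ProductWeights

namespace IsCoupling

variable {X Y : Type*} [Fintype X] [Fintype Y] {μX : X → ℝ} {μY : Y → ℝ} {μ : X → Y → ℝ}

theorem le_left (hμ : IsCoupling μX μY μ) (x : X) (y : Y) : μ x y ≤ μX x :=
  hμ.2.1 x ▸ single_le_sum (fun y _ => hμ.1 x y) (mem_univ y)

theorem eq_zero_of_left (hμ : IsCoupling μX μY μ) {x : X} (hx : μX x = 0) (y : Y) :
    μ x y = 0 :=
  le_antisymm (hx ▸ hμ.le_left x y) (hμ.1 x y)

theorem le_right (hμ : IsCoupling μX μY μ) (x : X) (y : Y) : μ x y ≤ μY y :=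
  hμ.2.2 y ▸ single_le_sum (fun x _ => hμ.1 x y) (mem_univ x)

theorem eq_zero_of_right (hμ : IsCoupling μX μY μ) (x : X) {y : Y} (hy : μY y = 0) :
    μ x y = 0 :=
  le_antisymm (hy ▸ hμ.le_right x y) (hμ.1 x y)

theorem sum_uncurry_eq_one (hμ : IsCoupling μX μY μ) (hμX : ∑ x, μX x = 1) :
    ∑ a : X × Y, μ a.1 a.2 = 1 := by
  simp only [Fintype.sum_prod_type, hμ.2.1, hμX]

theorem sum_uncurry_mul_fst (hμ : IsCoupling μX μY μ) (φ : X → ℝ) :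
    ∑ a : X × Y, μ a.1 a.2 * φ a.1 = ∑ x, μX x * φ x := by
  simp only [Fintype.sum_prod_type, ← sum_mul, hμ.2.1]

theorem sum_uncurry_mul_snd (hμ : IsCoupling μX μY μ) (φ : Y → ℝ) :
    ∑ a : X × Y, μ a.1 a.2 * φ a.2 = ∑ y, μY y * φ y := by
  rw [Fintype.sum_prod_type, sum_comm]
  simp only [← sum_mul, hμ.2.2]

theorem mixture {ι κ : Type*} [Fintype ι] [Fintype κ] {a : ι → ℝ} {b : κ → ℝ}
    {α : ι → X → ℝ} {β : κ → Y → ℝ} {μm : ι → κ → ℝ} {ν : ι → κ → X → Y → ℝ}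
    (hμm : IsCoupling a b μm) (hν : ∀ i k, IsCoupling (α i) (β k) (ν i k)) :
    IsCoupling (fun x => ∑ i, a i * α i x) (fun y => ∑ k, b k * β k y)
      (fun x y => ∑ i, ∑ k, μm i k * ν i k x y) := by
  refine ⟨fun x y => sum_nonneg fun i _ => sum_nonneg fun k _ =>
    mul_nonneg (hμm.1 i k) ((hν i k).1 x y), fun x => ?_, fun y => ?_⟩
  · calc ∑ y, ∑ i, ∑ k, μm i k * ν i k x y = ∑ i, ∑ k, μm i k * ∑ y, ν i k x y := by
          simp only [mul_sum]
          rw [sum_comm]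
          refine sum_congr rfl fun i _ => ?_
          rw [sum_comm]
      _ = ∑ i, a i * α i x := by simp only [(hν _ _).2.1, ← sum_mul, hμm.2.1]
  · calc ∑ x, ∑ i, ∑ k, μm i k * ν i k x y = ∑ k, ∑ i, μm i k * ∑ x, ν i k x y := by
          simp only [mul_sum]
          rw [sum_comm]
          conv_rhs => rw [sum_comm]
          refine sum_congr rfl fun i _ => ?_
          rw [sum_comm]
      _ = ∑ k, b k * β k y := by simp only [(hν _ _).2.2, ← sum_mul, hμm.2.2]

end IsCoupling

theorem isCoupling_mul {X Y : Type*} [Fintype X] [Fintype Y] {μX : X → ℝ} {μY : Y → ℝ}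
    (hμX : IsProb μX) (hμY : IsProb μY) : IsCoupling μX μY (fun x y => μX x * μY y) :=
  ⟨fun x y => mul_nonneg (hμX.1 x) (hμY.1 y), fun x => by rw [← mul_sum, hμY.2, mul_one],
    fun y => by rw [← sum_mul, hμX.2, one_mul]⟩

section GromovWasserstein

variable {X Y : Type*} [Fintype X] [Fintype Y] {μX : X → ℝ} {μY : Y → ℝ}

theorem GWLoss_eq_sum_prod (dX : X → X → ℝ) (dY : Y → Y → ℝ) (μ : X → Y → ℝ) :
    GWLoss dX dY μ = ∑ i : (X × Y) × (X × Y),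
      μ i.1.1 i.1.2 * μ i.2.1 i.2.2 * (dX i.1.1 i.2.1 - dY i.1.2 i.2.2) ^ 2 := by
  simp only [GWLoss, Fintype.sum_prod_type]
  exact sum_congr rfl fun _ _ => sum_congr rfl fun _ _ =>
    sum_congr rfl fun _ _ => sum_congr rfl fun _ _ => by ring

theorem GWLoss_eq_sum_mul_sum (dX : X → X → ℝ) (dY : Y → Y → ℝ) (μ : X → Y → ℝ) :
    GWLoss dX dY μ = ∑ x, ∑ y, μ x y * ∑ x', ∑ y', μ x' y' * (dX x x' - dY y y') ^ 2 := by
  simp only [GWLoss, mul_sum]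
  exact sum_congr rfl fun _ _ => sum_congr rfl fun _ _ =>
    sum_congr rfl fun _ _ => sum_congr rfl fun _ _ => by ring

theorem sqrt_GWLoss_le_add {μ : X → Y → ℝ} (hμ : IsCoupling μX μY μ) (hμX : ∑ x, μX x = 1)
    {dX dX' : X → X → ℝ} {dY dY' : Y → Y → ℝ} {eX : X → ℝ} {eY : Y → ℝ}
    (hX : ∀ x x', |dX x x' - dX' x x'| ≤ eX x + eX x')
    (hY : ∀ y y', |dY y y' - dY' y y'| ≤ eY y + eY y') :
    √(GWLoss dX dY μ) ≤
      √(GWLoss dX' dY' μ) + 2 * (√(∑ x, μX x * eX x ^ 2) + √(∑ y, μY y * eY y ^ 2)) := by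
  set w : (X × Y) × (X × Y) → ℝ := fun i => μ i.1.1 i.1.2 * μ i.2.1 i.2.2
  have hw : ∀ i, 0 ≤ w i := fun i => mul_nonneg (hμ.1 _ _) (hμ.1 _ _)
  have hμ1 := hμ.sum_uncurry_eq_one hμX
  have hfstX : √(∑ i, w i * eX i.1.1 ^ 2) = √(∑ x, μX x * eX x ^ 2) := by
    rw [← hμ.sum_uncurry_mul_fst, ← sum_prod_mul_mul_fst hμ1]
  have hsndX : √(∑ i, w i * eX i.2.1 ^ 2) = √(∑ x, μX x * eX x ^ 2) := by
    rw [← hμ.sum_uncurry_mul_fst, ← sum_prod_mul_mul_snd hμ1]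
  have hfstY : √(∑ i, w i * eY i.1.2 ^ 2) = √(∑ y, μY y * eY y ^ 2) := by
    rw [← hμ.sum_uncurry_mul_snd, ← sum_prod_mul_mul_fst hμ1]
  have hsndY : √(∑ i, w i * eY i.2.2 ^ 2) = √(∑ y, μY y * eY y ^ 2) := by
    rw [← hμ.sum_uncurry_mul_snd, ← sum_prod_mul_mul_snd hμ1]
  have hpt : ∀ i : (X × Y) × (X × Y),
      |(dX i.1.1 i.2.1 - dY i.1.2 i.2.2) - (dX' i.1.1 i.2.1 - dY' i.1.2 i.2.2)| ≤
        eX i.1.1 + eX i.2.1 + eY i.1.2 + eY i.2.2 := fun i => by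
    have := abs_sub_le_iff.1 (hX i.1.1 i.2.1)
    have := abs_sub_le_iff.1 (hY i.1.2 i.2.2)
    rw [abs_le]
    constructor <;> linarith
  have hminkowski := sqrt_sum_mul_sq_le_add_of_abs_sub_le hw hpt
  have h₁ := sqrt_sum_mul_sq_add_le hw (fun i => eX i.1.1 + eX i.2.1 + eY i.1.2) (eY ·.2.2)
  have h₂ := sqrt_sum_mul_sq_add_le hw (fun i => eX i.1.1 + eX i.2.1) (eY ·.1.2)
  have h₃ := sqrt_sum_mul_sq_add_le hw (eX ·.1.1) (eX ·.2.1)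
  rw [GWLoss_eq_sum_prod, GWLoss_eq_sum_prod]
  linarith

theorem dGW_le_sqrt_GWLoss {dX : X → X → ℝ} {dY : Y → Y → ℝ} {μ : X → Y → ℝ}
    (hμ : IsCoupling μX μY μ) : dGW dX dY μX μY ≤ √(GWLoss dX dY μ) :=
  csInf_le ⟨0, by rintro _ ⟨_, _, rfl⟩; positivity⟩ ⟨μ, hμ, rfl⟩

theorem le_dGW {dX : X → X → ℝ} {dY : Y → Y → ℝ} {c : ℝ} (hμX : IsProb μX) (hμY : IsProb μY)
    (h : ∀ μ, IsCoupling μX μY μ → c ≤ √(GWLoss dX dY μ)) : c ≤ dGW dX dY μX μY :=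
  le_csInf ⟨_, _, isCoupling_mul hμX hμY, rfl⟩ (by rintro _ ⟨μ, hμ, rfl⟩; exact h μ hμ)

end GromovWasserstein

section Pushforward

variable {X Y P Q : Type*} [Fintype X] [Fintype Y] [Fintype P] [Fintype Q]
  [DecidableEq P] [DecidableEq Q]

def pushCoupling (f : X → P) (g : Y → Q) (γ : X → Y → ℝ) (p : P) (q : Q) : ℝ :=
  ∑ x with f x = p, ∑ y with g y = q, γ x y

theorem sum_pushCoupling_mul (f : X → P) (g : Y → Q) (γ : X → Y → ℝ) (F : P → Q → ℝ) :
    ∑ p, ∑ q, pushCoupling f g γ p q * F p q = ∑ x, ∑ y, γ x y * F (f x) (g y) := by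
  calc ∑ p, ∑ q, pushCoupling f g γ p q * F p q
      = ∑ p, ∑ x with f x = p, ∑ q, ∑ y with g y = q, γ x y * F (f x) (g y) := by
        simp only [pushCoupling, sum_mul]
        rw [sum_congr rfl fun p _ => sum_comm]
        refine sum_congr rfl fun p _ => sum_congr rfl fun x hx => sum_congr rfl fun q _ =>
          sum_congr rfl fun y hy => ?_
        rw [(mem_filter.1 hx).2, (mem_filter.1 hy).2]
    _ = ∑ x, ∑ y, γ x y * F (f x) (g y) := by
        rw [sum_fiberwise]
        exact sum_congr rfl fun x _ => sum_fiberwise _ _ _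

theorem GWLoss_pushCoupling (f : X → P) (g : Y → Q) (γ : X → Y → ℝ)
    (dP : P → P → ℝ) (dQ : Q → Q → ℝ) :
    GWLoss dP dQ (pushCoupling f g γ) =
      GWLoss (fun x x' => dP (f x) (f x')) (fun y y' => dQ (g y) (g y')) γ := by
  simp only [GWLoss_eq_sum_mul_sum, sum_pushCoupling_mul]

theorem isCoupling_pushCoupling {μX : X → ℝ} {μY : Y → ℝ} {γ : X → Y → ℝ}
    (hγ : IsCoupling μX μY γ) (f : X → P) (g : Y → Q) :
    IsCoupling (fun p => ∑ x with f x = p, μX x) (fun q => ∑ y with g y = q, μY y)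
      (pushCoupling f g γ) := by
  refine ⟨fun p q => sum_nonneg fun x _ => sum_nonneg fun y _ => hγ.1 x y, fun p => ?_,
    fun q => ?_⟩
  · simp only [pushCoupling]
    rw [sum_comm]
    exact sum_congr rfl fun x _ => (sum_fiberwise _ _ _).trans (hγ.2.1 x)
  · simp only [pushCoupling]
    rw [sum_fiberwise, sum_comm]
    exact sum_congr rfl fun y _ => hγ.2.2 y

end Pushforward

section Blocks

variable {X : Type*} [Fintype X] {m : ℕ} {μX : X → ℝ} (P : PointedPartition X m)

theorem blockMass_eq_sum_filter : blockMass μX P = fun p => ∑ x with P.part x = p, μX x := by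
  funext p
  rw [sum_filter]
  rfl

theorem blockMeasure_of_ne {p : Fin m} {x : X} (h : P.part x ≠ p) : blockMeasure μX P p x = 0 :=
  if_neg h

variable (hμX : ∀ x, 0 ≤ μX x)
include hμX

theorem blockMass_mul_blockMeasure (p : Fin m) (x : X) :
    blockMass μX P p * blockMeasure μX P p x = if P.part x = p then μX x else 0 := by
  unfold blockMeasure
  split_ifs with hx
  · by_cases hp : blockMass μX P p = 0
    · have hle : μX x ≤ blockMass μX P p := by
        have := single_le_sum (f := fun x => if P.part x = p then μX x else 0)
          (fun x _ => by split_ifs <;> simp [hμX x]) (mem_univ x)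
        rwa [if_pos hx] at this
      simp [hp, le_antisymm (hp ▸ hle) (hμX x)]
    · exact mul_div_cancel₀ _ hp
  · exact mul_zero _

theorem sum_blockMass_mul_blockMeasure (x : X) :
    ∑ p, blockMass μX P p * blockMeasure μX P p x = μX x := by
  simp [blockMass_mul_blockMeasure P hμX]

theorem sum_blockMeasure {p : Fin m} (hp : blockMass μX P p ≠ 0) :
    ∑ x, blockMeasure μX P p x = 1 :=
  mul_left_cancel₀ hp <| by
    rw [mul_sum, mul_one]
    simp only [blockMass_mul_blockMeasure P hμX]
    rfl

theorem qEcc_eq (dX : X → X → ℝ) :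
    qEcc dX μX P = √(∑ x, μX x * dX (P.rep (P.part x)) x ^ 2) := by
  unfold qEcc
  congr 1
  simp only [mul_sum, mul_left_comm (blockMass μX P _), blockMass_mul_blockMeasure P hμX,
    mul_ite, mul_zero]
  rw [sum_comm]
  simp [mul_comm]

end Blocks

theorem PointedPartition.abs_dist_rep_sub_dist_le {X : Type*} [PseudoMetricSpace X] {m : ℕ}
    (P : PointedPartition X m) (x x' : X) :
    |dist (P.rep (P.part x)) (P.rep (P.part x')) - dist x x'| ≤
      dist (P.rep (P.part x)) x + dist (P.rep (P.part x')) x' := by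
  rw [← Real.dist_eq]
  exact dist_dist_dist_le _ _ _ _

section Quantization

variable {X Y : Type*} [Fintype X] [Fintype Y] {m : ℕ} {μX : X → ℝ} {μY : Y → ℝ}
  (PX : PointedPartition X m) (PY : PointedPartition Y m)

theorem pushCoupling_blockMixture (hμX : ∀ x, 0 ≤ μX x) {μm : Fin m → Fin m → ℝ}
    {ν : Fin m → Fin m → X → Y → ℝ} (hμm : IsCoupling (blockMass μX PX) (blockMass μY PY) μm)
    (hν : ∀ p q, IsCoupling (blockMeasure μX PX p) (blockMeasure μY PY q) (ν p q)) :
    pushCoupling PX.part PY.part (fun x y => ∑ p, ∑ q, μm p q * ν p q x y) = μm := by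
  funext p q
  have hsupp : ∀ p' q' x y, PX.part x ≠ p' ∨ PY.part y ≠ q' → ν p' q' x y = 0 := by
    rintro p' q' x y (h | h)
    exacts [(hν p' q').eq_zero_of_left (blockMeasure_of_ne PX h) y,
      (hν p' q').eq_zero_of_right x (blockMeasure_of_ne PY h)]
  -- a null block has `blockMeasure = 0` (division by zero), but then `μm p q = 0` as well
  have hmass : μm p q * ∑ x, ∑ y, ν p q x y = μm p q := by
    by_cases h : blockMass μX PX p = 0
    · rw [hμm.eq_zero_of_left h, zero_mul]
    · simp only [(hν p q).2.1, sum_blockMeasure PX hμX h, mul_one]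
  calc pushCoupling PX.part PY.part (fun x y => ∑ p, ∑ q, μm p q * ν p q x y) p q
      = ∑ x with PX.part x = p, ∑ y with PY.part y = q, μm p q * ν p q x y := by
        refine sum_congr rfl fun x hx => sum_congr rfl fun y hy => ?_
        -- on `Uᵖ × V^q` only the summand `(p, q)` survives
        have hxp := (mem_filter.1 hx).2
        have hyq := (mem_filter.1 hy).2
        refine (Fintype.sum_eq_single p fun p' hp' => sum_eq_zero fun q' _ => ?_).trans
          (Fintype.sum_eq_single q fun q' hq' => ?_)
        · rw [hsupp p' q' x y (Or.inl fun h => hp' (h.symm.trans hxp)), mul_zero]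
        · rw [hsupp p q' x y (Or.inr fun h => hq' (h.symm.trans hyq)), mul_zero]
    _ = ∑ x, ∑ y, μm p q * ν p q x y := by
        rw [sum_filter_of_ne fun x _ hx => ?_]
        · exact sum_congr rfl fun x _ => sum_filter_of_ne fun y _ hy => by
            by_contra h
            exact hy (by rw [hsupp p q x y (Or.inr h), mul_zero])
        · by_contra h
          exact hx (sum_eq_zero fun y _ => by rw [hsupp p q x y (Or.inl h), mul_zero])
    _ = μm p q := by simp only [← mul_sum, hmass]

variable [PseudoMetricSpace X] [PseudoMetricSpace Y]

theorem sqrt_GWLoss_le_sqrt_GWLoss_pushCoupling_add {μ : X → Y → ℝ} (hμ : IsCoupling μX μY μ)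
    (hμX : ∑ x, μX x = 1) (hμY : ∑ y, μY y = 1) {ε : ℝ} (hε : 0 ≤ ε)
    (hεX : ∀ x, dist (PX.rep (PX.part x)) x ≤ ε) (hεY : ∀ y, dist (PY.rep (PY.part y)) y ≤ ε) :
    √(GWLoss (fun x x' => dist x x') (fun y y' => dist y y') μ) ≤
      √(GWLoss (fun p p' => dist (PX.rep p) (PX.rep p')) (fun q q' => dist (PY.rep q) (PY.rep q'))
        (pushCoupling PX.part PY.part μ)) + 4 * ε := by
  rw [GWLoss_pushCoupling]
  calc _ ≤ _ + 2 * (√(∑ x, μX x * ε ^ 2) + √(∑ y, μY y * ε ^ 2)) :=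
        sqrt_GWLoss_le_add hμ hμX
          (fun x x' => (abs_sub_comm _ _).trans_le <|
            (PX.abs_dist_rep_sub_dist_le x x').trans (add_le_add (hεX x) (hεX x')))
          (fun y y' => (abs_sub_comm _ _).trans_le <|
            (PY.abs_dist_rep_sub_dist_le y y').trans (add_le_add (hεY y) (hεY y')))
    _ = _ := by
        rw [← sum_mul, ← sum_mul, hμX, hμY, one_mul, Real.sqrt_sq hε]
        ring

theorem dGW_rep_le_dGW_add_qEcc (hμX : IsProb μX) (hμY : IsProb μY) :
    dGW (fun p p' => dist (PX.rep p) (PX.rep p')) (fun q q' => dist (PY.rep q) (PY.rep q'))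
        (blockMass μX PX) (blockMass μY PY) ≤
      dGW (fun x x' => dist x x') (fun y y' => dist y y') μX μY +
        2 * (qEcc (fun x x' => dist x x') μX PX + qEcc (fun y y' => dist y y') μY PY) := by
  rw [← sub_le_iff_le_add]
  refine le_dGW hμX hμY fun γ hγ => sub_le_iff_le_add.2 ?_
  have hpush := isCoupling_pushCoupling hγ PX.part PY.part
  rw [← blockMass_eq_sum_filter, ← blockMass_eq_sum_filter] at hpush
  calc _ ≤ √(GWLoss (fun p p' => dist (PX.rep p) (PX.rep p'))
        (fun q q' => dist (PY.rep q) (PY.rep q')) (pushCoupling PX.part PY.part γ)) :=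
        dGW_le_sqrt_GWLoss hpush
    _ ≤ _ := by
        rw [GWLoss_pushCoupling, qEcc_eq PX hμX.1, qEcc_eq PY hμY.1]
        exact sqrt_GWLoss_le_add hγ hμX.2 PX.abs_dist_rep_sub_dist_le
          PY.abs_dist_rep_sub_dist_le

end Quantization

theorem qGW_algorithm_error_bound_general
    {X Y : Type*} [Fintype X] [Fintype Y] [MetricSpace X] [MetricSpace Y] {m : ℕ}
    (μX : X → ℝ) (μY : Y → ℝ) (hμX : IsProb μX) (hμY : IsProb μY)
    (PX : PointedPartition X m) (PY : PointedPartition Y m)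
    (ε : ℝ) (hε : 0 < ε)
    (hdiamX : ∀ x x' : X, PX.part x = PX.part x' → dist x x' ≤ ε)
    (hdiamY : ∀ y y' : Y, PY.part y = PY.part y' → dist y y' ≤ ε)
    (μm : Fin m → Fin m → ℝ) (ν : Fin m → Fin m → X → Y → ℝ)
    -- `μm` is an optimal coupling of the quantized representations `Xᵐ` and `Yᵐ`:
    (hμm : IsCoupling (blockMass μX PX) (blockMass μY PY) μm)
    (hopt : Real.sqrt (GWLoss (fun p p' => dist (PX.rep p) (PX.rep p'))
          (fun q q' => dist (PY.rep q) (PY.rep q')) μm) =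
        dGW (fun p p' => dist (PX.rep p) (PX.rep p'))
          (fun q q' => dist (PY.rep q) (PY.rep q'))
          (blockMass μX PX) (blockMass μY PY))
    (hν : ∀ p q, IsCoupling (blockMeasure μX PX p) (blockMeasure μY PY q) (ν p q)) :
    |dGW (fun x x' => dist x x') (fun y y' => dist y y') μX μY -
        Real.sqrt (GWLoss (fun x x' => dist x x') (fun y y' => dist y y')
          (fun x y => ∑ p, ∑ q, μm p q * ν p q x y))| ≤
      2 * (qEcc (fun x x' => dist x x') μX PX + qEcc (fun y y' => dist y y') μY PY) +
        8 * ε := by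
  have hμ : IsCoupling μX μY (fun x y => ∑ p, ∑ q, μm p q * ν p q x y) := by
    simpa only [sum_blockMass_mul_blockMeasure _ hμX.1, sum_blockMass_mul_blockMeasure _ hμY.1]
      using hμm.mixture hν
  have hupper := sqrt_GWLoss_le_sqrt_GWLoss_pushCoupling_add PX PY hμ hμX.2 hμY.2 hε.le
    (fun x => hdiamX _ _ (PX.part_rep _)) (fun y => hdiamY _ _ (PY.part_rep _))
  rw [pushCoupling_blockMixture PX PY hμX.1 hμm hν, hopt] at hupper
  have hlower := dGW_rep_le_dGW_add_qEcc PX PY hμX hμY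
  have hcoupling := dGW_le_sqrt_GWLoss (dX := fun x x' => dist x x')
    (dY := fun y y' => dist y y') hμ
  have hqX : 0 ≤ qEcc (fun x x' => dist x x') μX PX := Real.sqrt_nonneg _
  have hqY : 0 ≤ qEcc (fun y y' => dist y y') μY PY := Real.sqrt_nonneg _
  rw [abs_le]
  constructor <;> linarith

/-- error bound for the coupling produced by the quantized GW algorithm:
`|d_GW(X,Y) − δ| ≤ 2 (q(P_X) + q(P_Y)) + 8ε`, where `δ = GW(μ)^{1/2}` for the coupling
`μ` assembled from an optimal global coupling `μm` of the quantized representations and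
local linear matchings `ν p q`. -/
theorem qGW_algorithm_error_bound
    {X Y : Type*} [Fintype X] [Fintype Y] [MetricSpace X] [MetricSpace Y] {m : ℕ}
    (μX : X → ℝ) (μY : Y → ℝ) (hμX : IsProb μX) (hμY : IsProb μY)
    (PX : PointedPartition X m) (PY : PointedPartition Y m)
    (ε : ℝ) (hε : 0 < ε)
    (hdiamX : ∀ x x' : X, PX.part x = PX.part x' → dist x x' ≤ ε)
    (hdiamY : ∀ y y' : Y, PY.part y = PY.part y' → dist y y' ≤ ε)
    (μm : Fin m → Fin m → ℝ) (ν : Fin m → Fin m → X → Y → ℝ)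
    -- `μm` is an optimal coupling of the quantized representations `Xᵐ` and `Yᵐ`:
    (hμm : IsCoupling (blockMass μX PX) (blockMass μY PY) μm)
    (hopt : Real.sqrt (GWLoss (fun p p' => dist (PX.rep p) (PX.rep p'))
          (fun q q' => dist (PY.rep q) (PY.rep q')) μm) =
        dGW (fun p p' => dist (PX.rep p) (PX.rep p'))
          (fun q q' => dist (PY.rep q) (PY.rep q'))
          (blockMass μX PX) (blockMass μY PY))
    -- each `ν p q` is a minimizer of the local linear matching objective:
    (hν : ∀ p q, IsCoupling (blockMeasure μX PX p) (blockMeasure μY PY q) (ν p q))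
    (hνopt : ∀ p q, ∀ ν' : X → Y → ℝ,
      IsCoupling (blockMeasure μX PX p) (blockMeasure μY PY q) ν' →
        (∑ x, ∑ y, (dist x (PX.rep p) - dist y (PY.rep q)) ^ 2 * ν p q x y) ≤
          ∑ x, ∑ y, (dist x (PX.rep p) - dist y (PY.rep q)) ^ 2 * ν' x y) :
    |dGW (fun x x' => dist x x') (fun y y' => dist y y') μX μY -
        Real.sqrt (GWLoss (fun x x' => dist x x') (fun y y' => dist y y')
          (fun x y => ∑ p, ∑ q, μm p q * ν p q x y))| ≤
      2 * (qEcc (fun x x' => dist x x') μX PX + qEcc (fun y y' => dist y y') μY PY) +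
        8 * ε :=
  qGW_algorithm_error_bound_general μX μY hμX hμY PX PY ε hε hdiamX hdiamY μm ν hμm hopt hν
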